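/- arXiv:2109.10846 — 3 statements merged into one kernel-verified Lean document; each statement's English description precedes it below -/
import Mathlib

section
/- Let T be a bounded operator on a complex separable Hilbert space with the wandering subspace property, and let P_w be the orthogonal projection of H onto ker(T* − w̄). Then a complex number w is a bounded point evaluation for T if and only if the restriction P_w|_{ker T*} : ker T* → ker(T* − w̄) is invertible (bijective with bounded inverse). -/
/-!
Put `S = T - w`, so that `ker (T* - w̄) = (ran S)ᗮ`. Since `z - w` divides `zⁿ - wⁿ`, every
polynomial satisfies `p(T) - p(w) ∈ ran S`, hence `P p(T) = P p(w)`; as `‖P‖ ≤ 1`, a lower bound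
`‖x‖ ≤ c ‖P x‖` on `ker T*` is a bounded point evaluation.

Conversely, for `x ∈ ker T*` and a polynomial `q`, the polynomial `x - (z - w) q` takes the value
`x` at `w` and `x - S q(T)` at `T`. By the wandering subspace property the vectors `S q(T)` are
dense in `closure (ran S) = (ran S)ᗮᗮ ∋ x - P x`, so a bounded point evaluation gives
`‖x‖ ≤ c ‖P x‖`. This bound makes `P (ker T*)` closed, and a vector `b ∈ K` orthogonal to it is
orthogonal to `ker T*`, hence to every `Tⁿ (ker T*)` because `⟪b, Tⁿ x⟫ = wⁿ ⟪b, x⟫`; so `b = 0`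
and `P` maps `ker T*` onto `K`.
-/

open ContinuousLinearMap Submodule Filter

noncomputable section

variable {H : Type*} [NormedAddCommGroup H] [InnerProductSpace ℂ H] [CompleteSpace H]

/-- The wandering subspace `ker T*`. -/
def kerAdj (T : H →L[ℂ] H) : Submodule ℂ H := LinearMap.ker ((ContinuousLinearMap.adjoint T : H →L[ℂ] H) : H →ₗ[ℂ] H)

/-- `T` has the wandering subspace property: the closed linear span of
`⋃ₙ Tⁿ(ker T*)` is all of `H`. -/
def WSP (T : H →L[ℂ] H) : Prop :=
  (⨆ n : ℕ, (kerAdj T).map ((T ^ n : H →L[ℂ] H) : H →ₗ[ℂ] H)).topologicalClosure = ⊤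

/-- `w` is a bounded point evaluation for `T`: `‖p(w)‖ ≤ c ‖p(T)‖` for all
`ker T*`-valued polynomials `p`, where `p(T) = Σ Tⁿ xₙ` for `p(z) = Σ xₙ zⁿ`. -/
def IsBPE (T : H →L[ℂ] H) (w : ℂ) : Prop :=
  ∃ c > (0 : ℝ), ∀ (k : ℕ) (x : ℕ → H), (∀ n, x n ∈ kerAdj T) →
    ‖∑ n ∈ Finset.range (k + 1), w ^ n • x n‖ ≤
      c * ‖∑ n ∈ Finset.range (k + 1), (T ^ n) (x n)‖

/-- `E` is the (continuous extension of the) evaluation operator at `w`: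
it takes values in `ker T*` and sends `p(T)` to `p(w)`. -/
def IsEval (T : H →L[ℂ] H) (w : ℂ) (E : H →L[ℂ] H) : Prop :=
  (∀ y, E y ∈ kerAdj T) ∧
    ∀ (k : ℕ) (x : ℕ → H), (∀ n, x n ∈ kerAdj T) →
      E (∑ n ∈ Finset.range (k + 1), (T ^ n) (x n)) =
        ∑ n ∈ Finset.range (k + 1), w ^ n • x n

open scoped InnerProductSpace

section PolyEval

variable {𝕜 E : Type*} [NontriviallyNormedField 𝕜] [NormedAddCommGroup E] [NormedSpace 𝕜 E]

/-- `polyEval A k x = p(A)` for the `E`-valued polynomial `p(z) = ∑_{n ≤ k} x n zⁿ`. -/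
def polyEval (A : E →L[𝕜] E) (k : ℕ) : (ℕ → E) →ₗ[𝕜] E where
  toFun x := ∑ n ∈ Finset.range (k + 1), (A ^ n) (x n)
  map_add' x y := by simp [Finset.sum_add_distrib]
  map_smul' c x := by simp [Finset.smul_sum]

theorem polyEval_apply (A : E →L[𝕜] E) (k : ℕ) (x : ℕ → E) :
    polyEval A k x = ∑ n ∈ Finset.range (k + 1), (A ^ n) (x n) :=
  rfl

theorem polyEval_smul_one (w : 𝕜) (k : ℕ) (x : ℕ → E) :
    polyEval (w • 1 : E →L[𝕜] E) k x = ∑ n ∈ Finset.range (k + 1), w ^ n • x n := by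
  simp [polyEval_apply, smul_pow]

theorem pow_apply_sub_pow_apply_mem_range {A B : E →L[𝕜] E} (hAB : Commute A B) (n : ℕ)
    (x : E) : (A ^ n) x - (B ^ n) x ∈ LinearMap.range (↑(A - B) : E →ₗ[𝕜] E) :=
  ⟨(∑ i ∈ Finset.range n, A ^ i * B ^ (n - 1 - i)) x, by
    rw [coe_coe, ← mul_apply_eq_comp, hAB.mul_geom_sum₂, sub_apply]⟩

theorem polyEval_sub_polyEval_mem_range {A B : E →L[𝕜] E} (hAB : Commute A B) (k : ℕ)
    (x : ℕ → E) : polyEval A k x - polyEval B k x ∈ LinearMap.range (↑(A - B) : E →ₗ[𝕜] E) := by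
  rw [polyEval_apply, polyEval_apply, ← Finset.sum_sub_distrib]
  exact Submodule.sum_mem _ fun n _ => pow_apply_sub_pow_apply_mem_range hAB n (x n)

/-- The coefficients of `x₀ - (z - w) q(z)`, where `q` has coefficients `x`. -/
def subMulCoeff (w : 𝕜) (x₀ : E) (x : ℕ → E) : ℕ → E :=
  Pi.single 0 x₀ + w • x - fun n => if n = 0 then 0 else x (n - 1)

theorem subMulCoeff_mem {V : Submodule 𝕜 E} (w : 𝕜) {x₀ : E} {x : ℕ → E} (hx₀ : x₀ ∈ V)
    (hx : ∀ n, x n ∈ V) (n : ℕ) : subMulCoeff w x₀ x n ∈ V := by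
  rcases n with _ | n <;> simp [subMulCoeff, hx₀, hx, V.sub_mem, V.add_mem, V.smul_mem]

theorem polyEval_subMulCoeff (A : E →L[𝕜] E) (w : 𝕜) (x₀ : E) {k : ℕ} {x : ℕ → E}
    (hx : x (k + 1) = 0) :
    polyEval A (k + 1) (subMulCoeff w x₀ x) = x₀ - (A - w • 1) (polyEval A k x) := by
  have hsingle : polyEval A (k + 1) (Pi.single 0 x₀) = x₀ := by
    simp [polyEval_apply, Finset.sum_range_succ']
  have hsucc : polyEval A (k + 1) x = polyEval A k x := by
    simp [polyEval_apply, Finset.sum_range_succ _ (k + 1), hx]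
  have hshift : polyEval A (k + 1) (fun n => if n = 0 then 0 else x (n - 1)) =
      A (polyEval A k x) := by
    simp only [polyEval_apply, Finset.sum_range_succ', pow_succ']
    simp
  rw [subMulCoeff, map_sub, map_add, map_smul, hsingle, hsucc, hshift]
  simp only [sub_apply, smul_apply, one_apply_eq_self]
  abel

theorem exists_polyEval_eq_of_mem_iSup {A : E →L[𝕜] E} {V : Submodule 𝕜 E} {v : E}
    (hv : v ∈ ⨆ n : ℕ, V.map ((A ^ n : E →L[𝕜] E) : E →ₗ[𝕜] E)) :
    ∃ (k : ℕ) (x : ℕ → E), (∀ n, x n ∈ V) ∧ x (k + 1) = 0 ∧ polyEval A k x = v := by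
  obtain ⟨f, hf, rfl⟩ := (mem_iSup_iff_exists_finsupp _ _).1 hv
  choose z hzV hz using fun n => Submodule.mem_map.1 (hf n)
  set k := f.support.sup id
  have hsupp : f.support ⊆ Finset.range (k + 1) := fun n hn =>
    Finset.mem_range_succ_iff.2 (Finset.le_sup (f := id) hn)
  refine ⟨k, fun n => if n ≤ k then z n else 0, fun n => ?_, by simp, ?_⟩
  · show (if n ≤ k then z n else 0) ∈ V
    split_ifs
    exacts [hzV n, V.zero_mem]
  · rw [polyEval_apply, Finsupp.sum_of_support_subset f hsupp _ fun _ _ => rfl]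
    refine Finset.sum_congr rfl fun n hn => ?_
    rw [if_pos (Finset.mem_range_succ_iff.1 hn)]
    exact hz n

theorem norm_le_mul_norm_sub_of_forall_polyEval {A : E →L[𝕜] E} {V : Submodule 𝕜 E} {w : 𝕜}
    {c : ℝ} (hc : ∀ (k : ℕ) (x : ℕ → E), (∀ n, x n ∈ V) →
      ‖polyEval (w • 1 : E →L[𝕜] E) k x‖ ≤ c * ‖polyEval A k x‖)
    {x₀ v : E} (hx₀ : x₀ ∈ V) (hv : v ∈ ⨆ n : ℕ, V.map ((A ^ n : E →L[𝕜] E) : E →ₗ[𝕜] E)) :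
    ‖x₀‖ ≤ c * ‖x₀ - (A - w • 1) v‖ := by
  obtain ⟨k, x, hxV, hx, rfl⟩ := exists_polyEval_eq_of_mem_iSup hv
  have := hc (k + 1) (subMulCoeff w x₀ x) (subMulCoeff_mem w hx₀ hxV)
  rwa [polyEval_subMulCoeff _ _ _ hx, polyEval_subMulCoeff _ _ _ hx, sub_self, zero_apply,
    sub_zero] at this

end PolyEval

section Hilbert

variable {𝕜 E : Type*} [RCLike 𝕜] [NormedAddCommGroup E] [InnerProductSpace 𝕜 E]

theorem eq_starProjection_of_forall_mem {K : Submodule 𝕜 E} [K.HasOrthogonalProjection]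
    {P : E →L[𝕜] E} (hP : ∀ x, P x ∈ K ∧ x - P x ∈ Kᗮ) : P = K.starProjection :=
  ext fun x => (eq_starProjection_of_mem_orthogonal (hP x).1 (hP x).2).symm

theorem isClosed_map_of_norm_le_mul_norm [CompleteSpace E] {F : Type*} [NormedAddCommGroup F]
    [NormedSpace 𝕜 F] {V : Submodule 𝕜 E} (hV : IsClosed (V : Set E)) (f : E →L[𝕜] F) {c : ℝ}
    (hc : ∀ x ∈ V, ‖x‖ ≤ c * ‖f x‖) : IsClosed (V.map (f : E →ₗ[𝕜] F) : Set F) := by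
  have : CompleteSpace V := hV.completeSpace_coe
  have hf : AntilipschitzWith c.toNNReal (f ∘L V.subtypeL) :=
    antilipschitz_of_bound _ fun x =>
      (hc x x.2).trans (by gcongr; exacts [Real.le_coe_toNNReal c, le_rfl])
  convert hf.isClosed_range (f ∘L V.subtypeL).uniformContinuous
  ext y
  simp

theorem le_map_starProjection_of_norm_le [CompleteSpace E] {K V : Submodule 𝕜 E}
    [K.HasOrthogonalProjection] (hV : IsClosed (V : Set E)) {c : ℝ}
    (hc : ∀ x ∈ V, ‖x‖ ≤ c * ‖K.starProjection x‖)
    (hKV : ∀ b ∈ K, (∀ x ∈ V, ⟪b, x⟫_𝕜 = 0) → b = 0) :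
    K ≤ V.map (K.starProjection : E →ₗ[𝕜] E) := by
  set M := V.map (K.starProjection : E →ₗ[𝕜] E)
  have : CompleteSpace M := (isClosed_map_of_norm_le_mul_norm hV _ hc).completeSpace_coe
  intro y hy
  obtain ⟨a, ha, b, hb, rfl⟩ := M.exists_add_mem_mem_orthogonal y
  have hbK : b ∈ K := by
    simpa using K.sub_mem hy (map_le_iff_le_comap.2 (fun x _ => K.starProjection_apply_mem x) ha)
  suffices b = 0 by rwa [this, add_zero]
  refine hKV b hbK fun x hx => ?_
  rw [← starProjection_eq_self_iff.2 hbK, inner_starProjection_left_eq_right]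
  exact inner_left_of_mem_orthogonal (mem_map_of_mem hx) hb

theorem norm_le_mul_norm_starProjection_of_dense [CompleteSpace E] {S : E →L[𝕜] E}
    {N : Submodule 𝕜 E} (hN : N.topologicalClosure = ⊤) {x : E} {c : ℝ}
    (hc : ∀ v ∈ N, ‖x‖ ≤ c * ‖x - S v‖) :
    ‖x‖ ≤ c * ‖(LinearMap.range (S : E →ₗ[𝕜] E))ᗮ.starProjection x‖ := by
  set K := (LinearMap.range (S : E →ₗ[𝕜] E))ᗮ
  have hrange : Set.range S ⊆ closure (S '' N) := by
    rintro _ ⟨v, rfl⟩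
    refine image_closure_subset_closure_image S.continuous ⟨v, ?_, rfl⟩
    rw [← topologicalClosure_coe, hN]
    trivial
  have hmem : x - K.starProjection x ∈ closure (S '' N) := by
    have := K.sub_starProjection_mem_orthogonal x
    rw [orthogonal_orthogonal_eq_closure, ← SetLike.mem_coe, topologicalClosure_coe] at this
    exact closure_minimal hrange isClosed_closure this
  have hclosed : IsClosed {u : E | ‖x‖ ≤ c * ‖x - u‖} :=
    isClosed_le continuous_const (by fun_prop)
  have := closure_minimal (by rintro _ ⟨v, hv, rfl⟩; exact hc v hv) hclosed hmem
  simpa using this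

theorem eq_zero_of_forall_inner_eq_zero_of_dense [CompleteSpace E] {A : E →L[𝕜] E}
    {V : Submodule 𝕜 E}
    (hN : (⨆ n : ℕ, V.map ((A ^ n : E →L[𝕜] E) : E →ₗ[𝕜] E)).topologicalClosure = ⊤) {w : 𝕜}
    {b : E} (hb : b ∈ (LinearMap.range (↑(A - w • 1) : E →ₗ[𝕜] E))ᗮ)
    (hbV : ∀ x ∈ V, ⟪b, x⟫_𝕜 = 0) : b = 0 := by
  have hperp : b ∈ (⨆ n : ℕ, V.map ((A ^ n : E →L[𝕜] E) : E →ₗ[𝕜] E))ᗮ := by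
    rw [mem_orthogonal']
    refine fun u hu => (iSup_le fun n => ?_ : _ ≤ LinearMap.ker (innerₛₗ 𝕜 b)) hu
    rintro _ ⟨x, hx, rfl⟩
    have hdiff := inner_left_of_mem_orthogonal
      (pow_apply_sub_pow_apply_mem_range ((Commute.one_right A).smul_right w) n x) hb
    rw [inner_sub_right, sub_eq_zero] at hdiff
    rw [LinearMap.mem_ker, innerₛₗ_apply_apply, coe_coe, hdiff, smul_pow, one_pow, smul_apply,
      one_apply_eq_self, inner_smul_right, hbV x hx, mul_zero]
  rwa [topologicalClosure_eq_top_iff.1 hN, Submodule.mem_bot] at hperp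

theorem norm_polyEval_smul_one_le [CompleteSpace E] {A : E →L[𝕜] E} {V : Submodule 𝕜 E} {w : 𝕜}
    {c : ℝ} (hc₀ : 0 ≤ c)
    (hc : ∀ x ∈ V, ‖x‖ ≤ c * ‖(LinearMap.range (↑(A - w • 1) : E →ₗ[𝕜] E))ᗮ.starProjection x‖)
    (k : ℕ) {x : ℕ → E} (hx : ∀ n, x n ∈ V) :
    ‖polyEval (w • 1 : E →L[𝕜] E) k x‖ ≤ c * ‖polyEval A k x‖ := by
  set K := (LinearMap.range (↑(A - w • 1) : E →ₗ[𝕜] E))ᗮ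
  have hpoly : K.starProjection (polyEval A k x) =
      K.starProjection (polyEval (w • 1 : E →L[𝕜] E) k x) := by
    rw [← sub_eq_zero, ← map_sub, starProjection_apply_eq_zero_iff]
    exact le_orthogonal_orthogonal _
      (polyEval_sub_polyEval_mem_range ((Commute.one_right A).smul_right w) k x)
  have hmem : polyEval (w • 1 : E →L[𝕜] E) k x ∈ V := by
    rw [polyEval_smul_one]
    exact V.sum_mem fun n _ => V.smul_mem _ (hx n)
  calc ‖polyEval (w • 1 : E →L[𝕜] E) k x‖
      ≤ c * ‖K.starProjection (polyEval (w • 1 : E →L[𝕜] E) k x)‖ := hc _ hmem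
    _ = c * ‖K.starProjection (polyEval A k x)‖ := by rw [hpoly]
    _ ≤ c * ‖polyEval A k x‖ := by gcongr; exact K.norm_starProjection_apply_le _

end Hilbert

theorem isBPE_iff {T : H →L[ℂ] H} {w : ℂ} :
    IsBPE T w ↔ ∃ c > (0 : ℝ), ∀ (k : ℕ) (x : ℕ → H), (∀ n, x n ∈ kerAdj T) →
      ‖polyEval (w • 1 : H →L[ℂ] H) k x‖ ≤ c * ‖polyEval T k x‖ := by
  simp only [IsBPE, polyEval_smul_one, ← polyEval_apply]

theorem stmt_9_general (T : H →L[ℂ] H) (hT : WSP T)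
    (w : ℂ) (K : Submodule ℂ H)
    (hK : K = LinearMap.ker ((ContinuousLinearMap.adjoint T - (starRingEnd ℂ w) • (1 : H →L[ℂ] H) : H →L[ℂ] H) : H →ₗ[ℂ] H))
    (P : H →L[ℂ] H) (hP : ∀ x : H, P x ∈ K ∧ x - P x ∈ Kᗮ) :
    IsBPE T w ↔
      ((∀ y ∈ K, ∃ x ∈ kerAdj T, P x = y) ∧
        ∃ c > (0 : ℝ), ∀ x ∈ kerAdj T, ‖x‖ ≤ c * ‖P x‖) := by
  have hKS : K = (LinearMap.range (↑(T - w • 1) : H →ₗ[ℂ] H))ᗮ := by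
    rw [hK, orthogonal_range, map_sub, map_smulₛₗ, adjoint_one]
  subst hKS
  set K := (LinearMap.range (↑(T - w • 1) : H →ₗ[ℂ] H))ᗮ
  obtain rfl := eq_starProjection_of_forall_mem hP
  rw [isBPE_iff]
  constructor
  · rintro ⟨c, hc₀, hc⟩
    have hlow : ∀ x ∈ kerAdj T, ‖x‖ ≤ c * ‖K.starProjection x‖ := fun x hx =>
      norm_le_mul_norm_starProjection_of_dense hT fun v hv =>
        norm_le_mul_norm_sub_of_forall_polyEval hc hx hv
    refine ⟨fun y hy => ?_, c, hc₀, hlow⟩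
    exact mem_map.1 (le_map_starProjection_of_norm_le (isClosed_ker (adjoint T)) hlow
      (fun b hb => eq_zero_of_forall_inner_eq_zero_of_dense hT hb) hy)
  · rintro ⟨-, c, hc₀, hlow⟩
    exact ⟨c, hc₀, fun k x hx => norm_polyEval_smul_one_le hc₀.le hlow k hx⟩

/-- `w` is a bounded point evaluation iff the restriction
`P_w|_{ker T*} : ker T* → ker(T* - w̄)` is invertible (surjective with bounded inverse,
hence bijective). -/
theorem stmt_9 [TopologicalSpace.SeparableSpace H] (T : H →L[ℂ] H) (hT : WSP T)
    (w : ℂ) (K : Submodule ℂ H)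
    (hK : K = LinearMap.ker ((ContinuousLinearMap.adjoint T - (starRingEnd ℂ w) • (1 : H →L[ℂ] H) : H →L[ℂ] H) : H →ₗ[ℂ] H))
    (P : H →L[ℂ] H) (hP : ∀ x : H, P x ∈ K ∧ x - P x ∈ Kᗮ) :
    IsBPE T w ↔
      ((∀ y ∈ K, ∃ x ∈ kerAdj T, P x = y) ∧
        ∃ c > (0 : ℝ), ∀ x ∈ kerAdj T, ‖x‖ ≤ c * ‖P x‖) :=
  stmt_9_general T hT w K hK P hP
end
end

section
/- Let T be a left-invertible analytic operator on a complex separable Hilbert space with the wandering subspace property, and T' its Cauchy dual. Then the closed span of ⋃_{w ∈ D(0, r(T')^{-1})} ker(T* − w̄) equals H. -/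
/-! If `y` is orthogonal to every `ker (T* - w̄)` with `|w| < r(T')⁻¹`, it is orthogonal to the
resolvent vectors `(1 - z T')⁻¹ x`, `x ∈ ker T*`, which are eigenvectors of `T*` because
`T* T' = 1`. Expanding in powers of `z` gives `y ⊥ T'ⁿ (ker T*)`, i.e. `T'*ⁿ y ⊥ ker T*` for all
`n`. As `T T'*` is the identity on `(ker T*)ᗮ`, this yields `y = Tⁿ T'*ⁿ y ∈ ran Tⁿ` for every `n`,
and analyticity forces `y = 0`. -/

open ContinuousLinearMap Submodule Filter

noncomputable section

variable {H : Type*} [NormedAddCommGroup H] [InnerProductSpace ℂ H] [CompleteSpace H]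

open Topology InnerProductSpace

section PowerSeries

variable {𝕜 A E : Type*} [NontriviallyNormedField 𝕜] [NormedRing A] [NormedAlgebra 𝕜 A]
  [HasSummableGeomSeries A] [NormedAddCommGroup E] [NormedSpace 𝕜 E]

/-- The coefficients of the power series of `z ↦ L (1 - z • a)⁻¹` at `0` are the `L (a ^ n)`. -/
theorem map_pow_eq_zero_of_eventually_map_inverse_one_sub_smul (a : A) (L : A →L[𝕜] E)
    (h : ∀ᶠ z in 𝓝 (0 : 𝕜), L (Ring.inverse (1 - z • a)) = 0) (n : ℕ) : L (a ^ n) = 0 := by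
  have hL := (L.comp_hasFPowerSeriesOnBall
    (spectrum.hasFPowerSeriesOnBall_inverse_one_sub_smul 𝕜 a)).hasFPowerSeriesAt
  have : L (ContinuousMultilinearMap.mkPiRing 𝕜 (Fin n) (a ^ n) fun _ => 1) = 0 :=
    congrArg (fun p => p n fun _ => (1 : 𝕜)) (hL.congr h).eq_zero
  simpa only [ContinuousMultilinearMap.mkPiRing_apply, Finset.prod_const_one, one_smul] using this

end PowerSeries

theorem spectrum.eventually_nnnorm_lt_inv_spectralRadius {𝕜 A : Type*} [NontriviallyNormedField 𝕜]
    [NormedRing A] [NormedAlgebra 𝕜 A] [CompleteSpace A] [NormOneClass A] (a : A) :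
    ∀ᶠ z in 𝓝 (0 : 𝕜), (‖z‖₊ : ENNReal) < (spectralRadius 𝕜 a)⁻¹ := by
  have hpos : 0 < (spectralRadius 𝕜 a)⁻¹ :=
    ENNReal.inv_pos.2 ((spectrum.spectralRadius_le_nnnorm a).trans_lt ENNReal.coe_lt_top).ne
  filter_upwards [Metric.eball_mem_nhds 0 hpos] with z hz
  simpa [Metric.mem_eball, edist_zero_right, enorm_eq_nnnorm] using hz

section LeftInverse

variable {T S : H →L[ℂ] H}

theorem apply_adjoint_eq_self_of_mem_orthogonal (hTS : adjoint T ∘L S = 1) {v : H}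
    (hv : v ∈ (kerAdj T)ᗮ) : T (adjoint S v) = v := by
  refine ext_inner_right ℂ fun z => ?_
  have hz : z - S (adjoint T z) ∈ kerAdj T := by
    rw [kerAdj, LinearMap.mem_ker, coe_coe, map_sub, ← comp_apply (adjoint T) S, hTS,
      one_apply_eq_self, sub_self]
  have hvz := inner_eq_zero_symm.mp (hv _ hz)
  rw [inner_sub_right, sub_eq_zero] at hvz
  rw [← adjoint_inner_right, adjoint_inner_left, hvz]

theorem pow_apply_adjoint_pow_eq_self (hTS : adjoint T ∘L S = 1) {y : H}
    (hy : ∀ n, (adjoint S ^ n) y ∈ (kerAdj T)ᗮ) (n : ℕ) : (T ^ n) ((adjoint S ^ n) y) = y := by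
  induction n with
  | zero => simp
  | succ n ih =>
    rw [pow_succ, pow_succ', mul_apply_eq_comp, mul_apply_eq_comp,
      apply_adjoint_eq_self_of_mem_orthogonal hTS (hy n), ih]

theorem mem_range_pow_of_inner_pow_apply_eq_zero (hTS : adjoint T ∘L S = 1) {y : H}
    (hy : ∀ n, ∀ x ∈ kerAdj T, ⟪(S ^ n) x, y⟫_ℂ = 0) (n : ℕ) :
    y ∈ LinearMap.range ((T ^ n : H →L[ℂ] H) : H →ₗ[ℂ] H) := by
  refine ⟨(adjoint S ^ n) y, pow_apply_adjoint_pow_eq_self hTS (fun n x hx => ?_) n⟩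
  rw [← star_eq_adjoint, ← star_pow, star_eq_adjoint, adjoint_inner_right]
  exact hy n x hx

theorem adjoint_apply_inverse_one_sub_smul (hTS : adjoint T ∘L S = 1) {z : ℂ}
    (hz : IsUnit (1 - z • S)) {x : H} (hx : x ∈ kerAdj T) :
    adjoint T (Ring.inverse (1 - z • S) x) = z • Ring.inverse (1 - z • S) x := by
  set u := Ring.inverse (1 - z • S) x
  have hu : u = x + z • S u := by
    have : (1 - z • S) u = x := by
      rw [← mul_apply_eq_comp, Ring.mul_inverse_cancel _ hz, one_apply_eq_self]
    rw [← this]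
    simp
  have hTSu : adjoint T (S u) = u := by
    rw [← comp_apply, hTS, one_apply_eq_self]
  conv_lhs => rw [hu, map_add, map_smul, hTSu, show adjoint T x = 0 from hx, zero_add]

theorem inner_pow_apply_eq_zero_of_forall_eigenvector [Nontrivial H] (hTS : adjoint T ∘L S = 1)
    {y : H} (hy : ∀ z : ℂ, (‖z‖₊ : ENNReal) < (spectralRadius ℂ S)⁻¹ →
      ∀ u, adjoint T u = z • u → ⟪u, y⟫_ℂ = 0)
    (n : ℕ) {x : H} (hx : x ∈ kerAdj T) : ⟪(S ^ n) x, y⟫_ℂ = 0 := by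
  rw [← inner_conj_symm, map_eq_zero_iff _ (RingHom.injective _)]
  refine map_pow_eq_zero_of_eventually_map_inverse_one_sub_smul S
    ((innerSL ℂ y).comp (apply ℂ H x)) ?_ n
  filter_upwards [spectrum.eventually_nnnorm_lt_inv_spectralRadius (𝕜 := ℂ) S] with z hz
  have hunit := spectrum.isUnit_one_sub_smul_of_lt_inv_radius hz
  simpa [inner_eq_zero_symm] using
    hy z hz _ (adjoint_apply_inverse_one_sub_smul hTS hunit hx)

end LeftInverse

theorem stmt_17_general (T T' A : H →L[ℂ] H)
    (hA2 : (ContinuousLinearMap.adjoint T ∘L T) ∘L A = 1)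
    (hT' : T' = T ∘L A)
    (han : (⨅ n : ℕ, LinearMap.range ((T ^ n : H →L[ℂ] H) : H →ₗ[ℂ] H)) = ⊥) :
    (⨆ w ∈ {w : ℂ | (‖w‖₊ : ENNReal) < (spectralRadius ℂ T')⁻¹},
      LinearMap.ker ((ContinuousLinearMap.adjoint T -
        (starRingEnd ℂ w) • (1 : H →L[ℂ] H) : H →L[ℂ] H) : H →ₗ[ℂ] H)).topologicalClosure = ⊤ := by
  nontriviality H
  rw [Submodule.topologicalClosure_eq_top_iff, Submodule.eq_bot_iff]
  intro y hy
  have hTT' : adjoint T ∘L T' = 1 := by rw [hT', ← comp_assoc, hA2]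
  have hy_eigen : ∀ z : ℂ, (‖z‖₊ : ENNReal) < (spectralRadius ℂ T')⁻¹ →
      ∀ u, adjoint T u = z • u → ⟪u, y⟫_ℂ = 0 := by
    intro z hz u hu
    refine hy u (mem_iSup_of_mem (starRingEnd ℂ z) (mem_iSup_of_mem (by simpa using hz) ?_))
    simp [hu]
  have hy_range : y ∈ ⨅ n : ℕ, LinearMap.range ((T ^ n : H →L[ℂ] H) : H →ₗ[ℂ] H) :=
    (mem_iInf _).2 <| mem_range_pow_of_inner_pow_apply_eq_zero hTT'
      fun n _ hx => inner_pow_apply_eq_zero_of_forall_eigenvector hTT' hy_eigen n hx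
  rwa [han, Submodule.mem_bot] at hy_range

/-- for left-invertible analytic `T` with the wandering subspace property,
the closed span of `⋃_{|w| < r(T')⁻¹} ker(T* - w̄)` is `H`. -/
theorem stmt_17 [TopologicalSpace.SeparableSpace H] (T T' A : H →L[ℂ] H) (hT : WSP T)
    (hA1 : A ∘L (ContinuousLinearMap.adjoint T ∘L T) = 1)
    (hA2 : (ContinuousLinearMap.adjoint T ∘L T) ∘L A = 1)
    (hT' : T' = T ∘L A)
    (han : (⨅ n : ℕ, LinearMap.range ((T ^ n : H →L[ℂ] H) : H →ₗ[ℂ] H)) = ⊥) :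
    (⨆ w ∈ {w : ℂ | (‖w‖₊ : ENNReal) < (spectralRadius ℂ T')⁻¹},
      LinearMap.ker ((ContinuousLinearMap.adjoint T -
        (starRingEnd ℂ w) • (1 : H →L[ℂ] H) : H →L[ℂ] H) : H →ₗ[ℂ] H)).topologicalClosure = ⊤ :=
  stmt_17_general T T' A hA2 hT' han
end
end

section
/- Let T be a bounded analytic operator on a complex Banach space X (i.e. ⋂_{n∈ℕ} T^n(X) = {0}). Then 0 belongs to the local spectrum σ_T(x) for every nonzero x ∈ X; equivalently, if there is an open neighborhood G of 0 and an analytic function f : G → X with (λ − T) f(λ) = x for all λ ∈ G, then x = 0. -/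
/-!
If `(λ - T) g(λ) = c` near `0` with `g` analytic, then `c = T(-g(0))`, and the difference
quotient `h = (g - g(0)) / λ` is again analytic with `(λ - T) h(λ) = -g(0)`. So `0 ∈ ρ_T(c)`
forces `c = T d` with `0 ∈ ρ_T(d)`; iterating, `x` lies in every `Tⁿ(X)`, hence is `0` when
`T` is analytic.
-/

open ContinuousLinearMap Submodule Filter

noncomputable section

variable {H : Type*} [NormedAddCommGroup H] [InnerProductSpace ℂ H] [CompleteSpace H]

open scoped Topology

theorem AnalyticAt.dslope_same {𝕜 E : Type*} [NontriviallyNormedField 𝕜] [NormedAddCommGroup E]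
    [NormedSpace 𝕜 E] {g : 𝕜 → E} {a : 𝕜} (hg : AnalyticAt 𝕜 g a) :
    AnalyticAt 𝕜 (dslope g a) a :=
  let ⟨_, hp⟩ := hg
  hp.has_fpower_series_dslope_fslope.analyticAt

section LocalResolvent

variable {X : Type*} [NormedAddCommGroup X] [NormedSpace ℂ X]

/-- `0 ∈ ρ_T(c)`, with the open set of the definition shrunk to a neighbourhood of `0`. -/
def ZeroMemLocalResolvent (T : X →L[ℂ] X) (c : X) : Prop :=
  ∃ g : ℂ → X, AnalyticAt ℂ g 0 ∧ ∀ᶠ l in 𝓝 0, l • g l - T (g l) = c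

namespace ZeroMemLocalResolvent

variable {T : X →L[ℂ] X} {c : X}

theorem exists_eq_apply (hc : ZeroMemLocalResolvent T c) :
    ∃ d, ZeroMemLocalResolvent T d ∧ c = T d := by
  obtain ⟨g, hg, hgc⟩ := hc
  have hc0 : c = T (-g 0) := by simpa using hgc.self_of_nhds.symm
  have hsmul : ∀ l : ℂ, l • dslope g 0 l = g l - g 0 := fun l => by
    simpa using sub_smul_dslope g 0 l
  have hg_eq : g =ᶠ[𝓝 0] fun l => T (dslope g 0 l) := by
    refine (hg.continuousAt.eventuallyEq_nhds_iff_eventuallyEq_nhdsNE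
      (T.continuous.continuousAt.comp hg.dslope_same.continuousAt)).1 ?_
    filter_upwards [eventually_nhdsWithin_of_eventually_nhds hgc, self_mem_nhdsWithin]
      with l hl hl0
    refine smul_right_injective X hl0 ?_
    calc l • g l = T (g l) + c := by rw [← hl]; abel
      _ = T (l • dslope g 0 l) := by rw [hsmul, hc0, map_sub, map_neg, sub_eq_add_neg]
      _ = l • T (dslope g 0 l) := map_smul T l _
  refine ⟨-g 0, ⟨dslope g 0, hg.dslope_same, ?_⟩, hc0⟩
  filter_upwards [hg_eq] with l hl
  rw [hsmul, ← hl]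
  abel

theorem mem_range_pow (hc : ZeroMemLocalResolvent T c) (n : ℕ) :
    c ∈ LinearMap.range ((T ^ n : X →L[ℂ] X) : X →ₗ[ℂ] X) := by
  induction n generalizing c with
  | zero => exact ⟨c, rfl⟩
  | succ n ih =>
    obtain ⟨d, hd, rfl⟩ := hc.exists_eq_apply
    obtain ⟨e, rfl⟩ := ih hd
    exact ⟨e, by simp [pow_succ']⟩

end ZeroMemLocalResolvent

end LocalResolvent

theorem stmt_18_general {X : Type*} [NormedAddCommGroup X] [NormedSpace ℂ X]
    (T : X →L[ℂ] X)
    (han : (⨅ n : ℕ, LinearMap.range ((T ^ n : X →L[ℂ] X) : X →ₗ[ℂ] X)) = ⊥)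
    (x : X) (G : Set ℂ) (hG : IsOpen G) (h0 : (0 : ℂ) ∈ G)
    (f : ℂ → X) (hf : AnalyticOnNhd ℂ f G)
    (hfx : ∀ l ∈ G, l • f l - T (f l) = x) :
    x = 0 := by
  have hx : ZeroMemLocalResolvent T x :=
    ⟨f, hf 0 h0, Filter.eventually_of_mem (hG.mem_nhds h0) hfx⟩
  rw [← Submodule.mem_bot ℂ, ← han, Submodule.mem_iInf]
  exact hx.mem_range_pow

/-- if `T` is analytic on a complex Banach space `X`, then `0 ∈ σ_T(x)` for
every nonzero `x`: any analytic local resolvent function at `0` forces `x = 0`. -/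
theorem stmt_18 {X : Type*} [NormedAddCommGroup X] [NormedSpace ℂ X] [CompleteSpace X]
    (T : X →L[ℂ] X)
    (han : (⨅ n : ℕ, LinearMap.range ((T ^ n : X →L[ℂ] X) : X →ₗ[ℂ] X)) = ⊥)
    (x : X) (G : Set ℂ) (hG : IsOpen G) (h0 : (0 : ℂ) ∈ G)
    (f : ℂ → X) (hf : AnalyticOnNhd ℂ f G)
    (hfx : ∀ l ∈ G, l • f l - T (f l) = x) :
    x = 0 :=
  stmt_18_general T han x G hG h0 f hf hfx
end
end
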